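/- arXiv:2508.17587 — 2 statements merged into one kernel-verified Lean document; each statement's English description precedes it below -/
import Mathlib

section
/- Let A be a commutative ring, and let M = (T')⁻¹A be the localization of A at the multiplicative set T' generated by 𝕃, (𝕃−τ)², and the elements [ℙ^n] = τ^n + τ^{n-1}𝕃 + ⋯ + 𝕃^n for n ≥ 1, where τ, 𝕃 ∈ A. Then in M, each class {GL_n} := (𝕃^n−τ^n)(𝕃^n−𝕃τ^{n-1})⋯(𝕃^n−𝕃^{n-1}τ) becomes invertible; conversely, the multiplicative set generated by the {GL_n} for n ≥ 1 generates the same localization as T' (take A = ℤ[τ,𝕃]). -/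
open MvPolynomial

noncomputable def tau : MvPolynomial (Fin 2) ℤ := X 0
noncomputable def Lef : MvPolynomial (Fin 2) ℤ := X 1

/-- [ℙ^n] = Σ_{i=0}^n τ^{n-i} 𝕃^i. -/
noncomputable def Pcl (n : ℕ) : MvPolynomial (Fin 2) ℤ :=
  ∑ i ∈ Finset.range (n + 1), tau ^ (n - i) * Lef ^ i

/-- {GL_n} = ∏_{i=0}^{n-1} (𝕃^n − 𝕃^i τ^{n-i}). -/
noncomputable def GLcl (n : ℕ) : MvPolynomial (Fin 2) ℤ :=
  ∏ i ∈ Finset.range n, (Lef ^ n - Lef ^ i * tau ^ (n - i))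

/-- The multiplicative set T' generated by 𝕃, (𝕃−τ)², and [ℙ^n], n ≥ 1. -/
noncomputable def Tset : Submonoid (MvPolynomial (Fin 2) ℤ) :=
  Submonoid.closure ({Lef, (Lef - tau) ^ 2} ∪ {p | ∃ n ≥ 1, p = Pcl n})

/-- The multiplicative set generated by the {GL_n}, n ≥ 1. -/
noncomputable def GLset : Submonoid (MvPolynomial (Fin 2) ℤ) :=
  Submonoid.closure {p | ∃ n ≥ 1, p = GLcl n}

/-- Key geometric sum identity: (𝕃 − τ)·[ℙ^m] = 𝕃^{m+1} − τ^{m+1}. -/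
lemma pcl_mul (m : ℕ) : (Lef - tau) * Pcl m = Lef ^ (m + 1) - tau ^ (m + 1) := by
  have h := geom_sum₂_mul Lef tau (m + 1)
  have hp : Pcl m = ∑ i ∈ Finset.range (m + 1), Lef ^ i * tau ^ (m + 1 - 1 - i) := by
    unfold Pcl
    refine Finset.sum_congr rfl fun i _ => ?_
    rw [mul_comm]
    norm_num
  rw [hp, mul_comm, h]

lemma glcl_factor (n : ℕ) :
    GLcl n = ∏ i ∈ Finset.range n, (Lef ^ i * ((Lef - tau) * Pcl (n - 1 - i))) := by
  unfold GLcl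
  refine Finset.prod_congr rfl fun i hi => ?_
  rw [Finset.mem_range] at hi
  have h1 : n - 1 - i + 1 = n - i := by omega
  rw [pcl_mul, h1, mul_sub]
  rw [← pow_add]
  congr 2
  omega

lemma pcl_mem_Tset (k : ℕ) : Pcl k ∈ Tset := by
  rcases Nat.eq_zero_or_pos k with hk | hk
  · subst hk
    have : Pcl 0 = 1 := by simp [Pcl]
    rw [this]; exact one_mem _
  · exact Submonoid.subset_closure (Or.inr ⟨k, hk, rfl⟩)

lemma lef_mem_Tset : Lef ∈ Tset :=
  Submonoid.subset_closure (Or.inl (by left; rfl))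

lemma sq_mem_Tset : (Lef - tau) ^ 2 ∈ Tset :=
  Submonoid.subset_closure (Or.inl (by right; rfl))

lemma unit_of_dvd_mem {S : Submonoid (MvPolynomial (Fin 2) ℤ)}
    {x m : MvPolynomial (Fin 2) ℤ} (hm : m ∈ S) (h : x ∣ m) :
    IsUnit (algebraMap (MvPolynomial (Fin 2) ℤ) (Localization S) x) := by
  obtain ⟨y, rfl⟩ := h
  have hu := IsLocalization.map_units (M := S) (Localization S) ⟨x * y, hm⟩
  rw [map_mul] at hu
  exact isUnit_of_mul_isUnit_left hu

/-- In the localization of ℤ[τ,𝕃] at T' each {GL_n} (n ≥ 1) becomes invertible, and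
conversely in the localization at the {GL_n} each of 𝕃, (𝕃−τ)², and [ℙ^n] (n ≥ 1)
becomes invertible; so the two localizations agree. -/
theorem stmt3 :
    (∀ n : ℕ, 1 ≤ n →
      IsUnit (algebraMap (MvPolynomial (Fin 2) ℤ) (Localization Tset) (GLcl n))) ∧
    (IsUnit (algebraMap (MvPolynomial (Fin 2) ℤ) (Localization GLset) Lef) ∧
     IsUnit (algebraMap (MvPolynomial (Fin 2) ℤ) (Localization GLset) ((Lef - tau) ^ 2)) ∧
     ∀ n : ℕ, 1 ≤ n →
      IsUnit (algebraMap (MvPolynomial (Fin 2) ℤ) (Localization GLset) (Pcl n))) := by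
  have hGL2 : GLcl 2 ∈ GLset :=
    Submonoid.subset_closure ⟨2, by norm_num, rfl⟩
  have hGL2eq : GLcl 2 = Lef * ((Lef - tau) ^ 2 * Pcl 1) := by
    simp only [GLcl, Pcl, Finset.prod_range_succ, Finset.prod_range_zero,
      Finset.sum_range_succ, Finset.sum_range_zero]
    ring
  refine ⟨?_, ?_, ?_, ?_⟩
  · intro n hn
    refine unit_of_dvd_mem ?_ (Dvd.intro _ rfl : GLcl n ∣ GLcl n * (Lef - tau) ^ n)
    have : GLcl n * (Lef - tau) ^ n =
        ∏ i ∈ Finset.range n, (Lef ^ i * ((Lef - tau) ^ 2 * Pcl (n - 1 - i))) := by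
      have hc : (Lef - tau) ^ n = ∏ _i ∈ Finset.range n, (Lef - tau) := by simp
      rw [glcl_factor, hc, ← Finset.prod_mul_distrib]
      refine Finset.prod_congr rfl fun i _ => ?_
      ring
    rw [this]
    exact Submonoid.prod_mem _ fun i _ =>
      mul_mem (pow_mem lef_mem_Tset i) (mul_mem sq_mem_Tset (pcl_mem_Tset _))
  · exact unit_of_dvd_mem hGL2 ⟨(Lef - tau) ^ 2 * Pcl 1, hGL2eq.symm ▸ rfl⟩
  · refine unit_of_dvd_mem hGL2 ⟨Lef * Pcl 1, ?_⟩
    rw [hGL2eq]; ring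
  · intro n hn
    refine unit_of_dvd_mem (Submonoid.subset_closure ⟨n + 1, by omega, rfl⟩ : GLcl (n+1) ∈ GLset) ?_
    rw [glcl_factor]
    refine dvd_trans ?_ (Finset.dvd_prod_of_mem _ (Finset.mem_range.mpr (Nat.succ_pos n)))
    have : n + 1 - 1 - 0 = n := by omega
    rw [this]
    exact Dvd.dvd.mul_left (Dvd.intro_left _ rfl) _
end

section
/- (Hankel rationality criterion) Let F be a field and (a_m)_{m≥0} a sequence in F. The power series Σ_m a_m t^m is a rational function (quotient of polynomials) if and only if there exist j > 0 and j₀ > 0 such that for every m > j₀, the (j+1)×(j+1) Hankel determinant det[a_{m+i+k}]_{0≤i,k≤j} vanishes. -/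
/-!
If `q * f = p`, the reversed coefficient vector of `q` is a kernel vector of the Hankel
matrices of size greater than `deg q` that start far enough out.

Conversely, suppose the `(J+1)`-Hankel determinants vanish from some point on. If some later
`J`-determinant vanishes, then so do all the following ones: a kernel vector `μ` of the
`(J+1)`-matrix either restricts to a kernel vector of the next `J`-matrix, or it expresses the
last column through the others, and then a left kernel vector of the `J`-matrix also kills the
next one. So we may lower `J`. Otherwise each `(J+1)`-matrix yields a recurrence of order `J`
valid on its window of indices; these recurrences agree on overlapping windows because the
`J`-matrices are nonsingular, so one recurrence holds eventually, and the reciprocal of its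
characteristic polynomial is a denominator for `f`.
-/

open PowerSeries Matrix

open scoped Polynomial

namespace HankelRationality

variable {R : Type*}

def hankel (a : ℕ → R) (J m : ℕ) : Matrix (Fin J) (Fin J) R :=
  of fun i k => a (m + i + k)

theorem submatrix_castSucc_castSucc_hankel (a : ℕ → R) (J m : ℕ) :
    (hankel a (J + 1) m).submatrix Fin.castSucc Fin.castSucc = hankel a J m :=
  rfl

theorem submatrix_succ_castSucc_hankel (a : ℕ → R) (J m : ℕ) :
    (hankel a (J + 1) m).submatrix Fin.succ Fin.castSucc = hankel a J (m + 1) := by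
  ext i k
  simp only [hankel, submatrix_apply, of_apply, Fin.val_succ, Fin.val_castSucc]
  congr 1
  omega

theorem submatrix_castSucc_succ_hankel (a : ℕ → R) (J m : ℕ) :
    (hankel a (J + 1) m).submatrix Fin.castSucc Fin.succ = hankel a J (m + 1) := by
  ext i k
  simp only [hankel, submatrix_apply, of_apply, Fin.val_succ, Fin.val_castSucc]
  congr 1
  omega

theorem hankel_mulVec_apply [NonUnitalNonAssocSemiring R] (a : ℕ → R) (J m : ℕ) (v : Fin J → R)
    (i : Fin J) :
    (hankel a J m *ᵥ v) i = ∑ k : Fin J, a (m + i + k) * v k :=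
  rfl

theorem exists_mulVec_submatrix_castSucc_eq_zero {ι κ : Type*} [NonUnitalNonAssocSemiring R]
    [Fintype ι] {J : ℕ} {M : Matrix ι (Fin (J + 1)) R} {μ : Fin (J + 1) → R} (hμ0 : μ ≠ 0)
    (hμ : M *ᵥ μ = 0) (hlast : μ (Fin.last J) = 0) (e : κ → ι) :
    ∃ v ≠ 0, M.submatrix e Fin.castSucc *ᵥ v = 0 := by
  refine ⟨μ ∘ Fin.castSucc, fun h => hμ0 (funext fun k => ?_), funext fun i => ?_⟩
  · exact Fin.lastCases hlast (fun k => congrFun h k) k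
  · have := congrFun hμ (e i)
    simp only [mulVec, dotProduct, Fin.sum_univ_castSucc, hlast, mul_zero, add_zero,
      Pi.zero_apply] at this
    exact this

section CommRing

variable [CommRing R]

def IsRational (f : R⟦X⟧) : Prop :=
  ∃ p q : R[X], q ≠ 0 ∧ (q : R⟦X⟧) * f = p

theorem isRational_of_coeff_eventually_eq_zero {f : R⟦X⟧} {q : R[X]} (hq : q ≠ 0) (N : ℕ)
    (h : ∀ n ≥ N, coeff n ((q : R⟦X⟧) * f) = 0) : IsRational f := by
  refine ⟨trunc N ((q : R⟦X⟧) * f), q, hq, ?_⟩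
  ext n
  rw [Polynomial.coeff_coe, coeff_trunc]
  split_ifs with hn
  · rfl
  · exact h n (not_lt.mp hn)

theorem coeff_coe_mul_mk (a : ℕ → R) {q : R[X]} {J n : ℕ} (hq : q.natDegree ≤ J) (hn : J ≤ n) :
    coeff n ((q : R⟦X⟧) * mk a) = ∑ s ∈ Finset.range (J + 1), q.coeff s * a (n - s) := by
  rw [coeff_mul, Finset.Nat.sum_antidiagonal_eq_sum_range_succ_mk]
  simp only [Polynomial.coeff_coe, coeff_mk]
  refine (Finset.sum_subset (Finset.range_subset_range.mpr (by omega)) fun s _ hs => ?_).symm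
  rw [Polynomial.coeff_eq_zero_of_natDegree_lt (by simp at hs; omega), zero_mul]

theorem hankel_mulVec_coeff_eq_zero (a : ℕ → R) {p q : R[X]} {J m : ℕ} (hJ : q.natDegree ≤ J)
    (h : (q : R⟦X⟧) * mk a = p) (hm : p.natDegree < m + J) :
    hankel a (J + 1) m *ᵥ (fun k => q.coeff (J - k)) = 0 := by
  funext i
  have hcoeff := coeff_coe_mul_mk a hJ (n := m + i + J) (by omega)
  rw [h, Polynomial.coeff_coe, Polynomial.coeff_eq_zero_of_natDegree_lt (by omega),
    ← Finset.sum_range_reflect] at hcoeff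
  rw [hankel_mulVec_apply, Pi.zero_apply, hcoeff, Fin.sum_univ_eq_sum_range
    (fun k => a (m + i + k) * q.coeff (J - k))]
  refine Finset.sum_congr rfl fun k hk => ?_
  rw [Finset.mem_range] at hk
  rw [mul_comm, show m + i + J - (J + 1 - 1 - k) = m + i + k by omega, Nat.add_sub_cancel]

theorem det_hankel_eq_zero_of_mul_mk_eq [IsDomain R] (a : ℕ → R) {p q : R[X]} {J m : ℕ}
    (hq : q ≠ 0) (hJ : q.natDegree ≤ J) (h : (q : R⟦X⟧) * mk a = p)
    (hm : p.natDegree < m + J) : (hankel a (J + 1) m).det = 0 := by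
  refine exists_mulVec_eq_zero_iff.mp ⟨_, fun h0 => ?_, hankel_mulVec_coeff_eq_zero a hJ h hm⟩
  have := congrFun h0 ⟨J - q.natDegree, by omega⟩
  simp only [Nat.sub_sub_self hJ, Pi.zero_apply] at this
  exact hq (Polynomial.leadingCoeff_eq_zero.mp this)

theorem isRational_mk_of_linearRecurrence [Nontrivial R] (a : ℕ → R) {J : ℕ} (c : Fin J → R)
    (N : ℕ) (hrec : ∀ n ≥ N, a (n + J) = ∑ k, c k * a (n + k)) : IsRational (mk a) := by
  -- the reciprocal of the characteristic polynomial `X ^ J - ∑ k, c k * X ^ k`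
  set q : R[X] := 1 - ∑ k : Fin J, Polynomial.C (c k) * Polynomial.X ^ (J - k)
  have hq : q.coeff 0 = 1 := by
    simp only [q, Polynomial.coeff_sub, Polynomial.coeff_one_zero, Polynomial.finsetSum_coeff,
      Polynomial.coeff_C_mul_X_pow]
    rw [Finset.sum_eq_zero fun k _ => if_neg (by omega), sub_zero]
  refine isRational_of_coeff_eventually_eq_zero (q := q) (fun h => by simp [h] at hq) (N + J)
    fun n hn => ?_
  have hq' : (q : R⟦X⟧) = 1 - ∑ k : Fin J, C (c k) * X ^ (J - k) := by
    change Polynomial.coeToPowerSeries.ringHom q = _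
    simp only [q, map_sub, map_one, map_sum, map_mul, map_pow]
    simp
  rw [hq', sub_mul, Finset.sum_mul, map_sub, map_sum, one_mul, coeff_mk]
  simp only [mul_assoc, coeff_C_mul, coeff_X_pow_mul', coeff_mk]
  have hrec_n := hrec (n - J) (by omega)
  rw [Nat.sub_add_cancel (by omega)] at hrec_n
  rw [hrec_n, sub_eq_zero]
  refine Finset.sum_congr rfl fun k _ => ?_
  rw [if_pos (by omega), show n - (J - k) = n - J + k by omega]

end CommRing

section Field

variable {F : Type*} [Field F]

theorem det_hankel_succ_eq_zero (a : ℕ → F) {J m : ℕ} (hbig : (hankel a (J + 1) m).det = 0)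
    (hsmall : (hankel a J m).det = 0) : (hankel a J (m + 1)).det = 0 := by
  obtain ⟨μ, hμ0, hμ⟩ := exists_mulVec_eq_zero_iff.mpr hbig
  by_cases hlast : μ (Fin.last J) = 0
  · rw [← submatrix_succ_castSucc_hankel]
    exact exists_mulVec_eq_zero_iff.mp (exists_mulVec_submatrix_castSucc_eq_zero hμ0 hμ hlast _)
  · obtain ⟨ν, hν0, hν⟩ := exists_vecMul_eq_zero_iff.mpr hsmall
    -- `w` vanishes on the first `J` columns by the choice of `ν`, and on the last one since
    -- `w ⬝ᵥ μ = ν ⬝ᵥ 0` and `μ (Fin.last J) ≠ 0`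
    set w := ν ᵥ* (hankel a (J + 1) m).submatrix Fin.castSucc id
    have hw_castSucc : ∀ k, w (Fin.castSucc k) = 0 := congrFun hν
    have hw_last : w (Fin.last J) = 0 := by
      have hwμ : w ⬝ᵥ μ = 0 := by
        rw [← dotProduct_mulVec]
        convert dotProduct_zero ν
        exact funext fun i => congrFun hμ i.castSucc
      rw [dotProduct, Fin.sum_univ_castSucc] at hwμ
      simp only [hw_castSucc, zero_mul, Finset.sum_const_zero, zero_add] at hwμ
      exact (mul_eq_zero.mp hwμ).resolve_right hlast
    have hw : w = 0 := funext fun k => Fin.lastCases hw_last hw_castSucc k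
    rw [← submatrix_castSucc_succ_hankel]
    exact exists_vecMul_eq_zero_iff.mp ⟨ν, hν0, funext fun k => congrFun hw k.succ⟩

theorem exists_recurrence_of_det_hankel (a : ℕ → F) {J m : ℕ}
    (hbig : (hankel a (J + 1) m).det = 0) (hsmall : (hankel a J m).det ≠ 0) :
    ∃ c : Fin J → F, ∀ i : Fin (J + 1), a (m + i + J) = ∑ k, c k * a (m + i + k) := by
  obtain ⟨μ, hμ0, hμ⟩ := exists_mulVec_eq_zero_iff.mpr hbig
  have hlast : μ (Fin.last J) ≠ 0 := fun hlast => hsmall <| by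
    rw [← submatrix_castSucc_castSucc_hankel]
    exact exists_mulVec_eq_zero_iff.mp (exists_mulVec_submatrix_castSucc_eq_zero hμ0 hμ hlast _)
  refine ⟨fun k => -μ k.castSucc / μ (Fin.last J), fun i => ?_⟩
  have hrow := congrFun hμ i
  rw [hankel_mulVec_apply, Fin.sum_univ_castSucc, Pi.zero_apply] at hrow
  simp only [Fin.val_castSucc, Fin.val_last] at hrow
  have hsum : ∑ k : Fin J, -μ k.castSucc / μ (Fin.last J) * a (m + i + k)
      = -(∑ k : Fin J, a (m + i + k) * μ k.castSucc) / μ (Fin.last J) := by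
    rw [neg_div, Finset.sum_div, ← Finset.sum_neg_distrib]
    exact Finset.sum_congr rfl fun k _ => by ring
  rw [hsum, eq_div_iff hlast]
  linear_combination hrow

theorem recurrence_coeffs_unique (a : ℕ → F) {J m : ℕ} (hdet : (hankel a J m).det ≠ 0)
    {c c' : Fin J → F} (hc : ∀ i : Fin J, a (m + i + J) = ∑ k, c k * a (m + i + k))
    (hc' : ∀ i : Fin J, a (m + i + J) = ∑ k, c' k * a (m + i + k)) : c = c' := by
  refine mulVec_injective_iff_isUnit.mpr ((isUnit_iff_isUnit_det _).mpr hdet.isUnit) ?_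
  funext i
  simp only [hankel_mulVec_apply, mul_comm (a _)]
  rw [← hc i, ← hc' i]

theorem exists_recurrence_of_det_hankel_eventually (a : ℕ → F) {J j₀ : ℕ}
    (hbig : ∀ m > j₀, (hankel a (J + 1) m).det = 0)
    (hsmall : ∀ m > j₀, (hankel a J m).det ≠ 0) :
    ∃ c : Fin J → F, ∀ n > j₀, a (n + J) = ∑ k, c k * a (n + k) := by
  obtain ⟨c, hc⟩ :=
    exists_recurrence_of_det_hankel a (hbig (j₀ + 1) (by omega)) (hsmall _ (by omega))
  suffices h : ∀ m ≥ j₀ + 1, ∀ i : Fin (J + 1), a (m + i + J) = ∑ k, c k * a (m + i + k) from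
    ⟨c, fun n hn => by simpa using h n hn 0⟩
  intro m hm
  induction m, hm using Nat.le_induction with
  | base => exact hc
  | succ m hm ih =>
    obtain ⟨c', hc'⟩ :=
      exists_recurrence_of_det_hankel a (hbig (m + 1) (by omega)) (hsmall _ (by omega))
    have hcc' : c = c' := by
      refine recurrence_coeffs_unique a (hsmall (m + 1) (by omega)) (fun i => ?_)
        (fun i => hc' i.castSucc)
      have := ih i.succ
      simp only [Fin.val_succ] at this
      rwa [show m + 1 + (i : ℕ) = m + (i + 1) by omega]
    rwa [hcc']

theorem isRational_mk_of_det_hankel_eventually_eq_zero (a : ℕ → F) (J j₀ : ℕ)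
    (h : ∀ m > j₀, (hankel a J m).det = 0) : IsRational (mk a) := by
  induction J generalizing j₀ with
  | zero => simpa [hankel] using h (j₀ + 1) (by omega)
  | succ J ih =>
    by_cases hsmall : ∃ m₁ > j₀, (hankel a J m₁).det = 0
    · obtain ⟨m₁, hm₁, hdet⟩ := hsmall
      have hprop : ∀ m ≥ m₁, (hankel a J m).det = 0 := by
        intro m hm
        induction m, hm using Nat.le_induction with
        | base => exact hdet
        | succ m hm ih' => exact det_hankel_succ_eq_zero a (h m (by omega)) ih'
      exact ih m₁ fun m hm => hprop m hm.le
    · push Not at hsmall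
      obtain ⟨c, hc⟩ := exists_recurrence_of_det_hankel_eventually a h hsmall
      exact isRational_mk_of_linearRecurrence a c (j₀ + 1) hc

end Field

end HankelRationality

open HankelRationality

/-- Hankel rationality criterion: Σ a_m t^m ∈ F[[t]] is a rational function iff for some
j > 0 and j₀ > 0, all (j+1)×(j+1) Hankel determinants det[a_{m+i+k}] with m > j₀ vanish. -/
theorem stmt8 {F : Type*} [Field F] (a : ℕ → F) :
    (∃ p q : Polynomial F, q ≠ 0 ∧
        (q : PowerSeries F) * PowerSeries.mk a = (p : PowerSeries F)) ↔
    (∃ j > 0, ∃ j₀ > 0, ∀ m > j₀,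
        Matrix.det (Matrix.of fun i k : Fin (j + 1) => a (m + i + k)) = 0) := by
  constructor
  · rintro ⟨p, q, hq, h⟩
    refine ⟨q.natDegree + 1, q.natDegree.succ_pos, p.natDegree + 1, p.natDegree.succ_pos,
      fun m hm => ?_⟩
    exact det_hankel_eq_zero_of_mul_mk_eq a hq q.natDegree.le_succ h (by omega)
  · rintro ⟨j, -, j₀, -, h⟩
    exact isRational_mk_of_det_hankel_eventually_eq_zero a (j + 1) j₀ h
end
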